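/- Let X and Y be finite sets, let {ρ_x}_{x∈X} be d×d complex density matrices (Hermitian positive semidefinite with trace 1), let π be a probability distribution on X, and let {M_y}_{y∈Y} be Hermitian positive semidefinite d×d matrices with Σ_y M_y = I (a POVM). Assume the average state ρ̄ = Σ_x π_x ρ_x is invertible. Define the dual pair: M'_x = π_x · ρ̄^{−1/2} ρ_x ρ̄^{−1/2} for x ∈ X, π'_y = Tr(ρ̄ M_y) for y ∈ Y, and ρ'_y = ρ̄^{1/2} M_y ρ̄^{1/2} / π'_y whenever π'_y > 0. Then: (i) each M'_x is Hermitian positive semidefinite and Σ_x M'_x = I, so {M'_x} is a POVM; (ii) π' is a probability distribution on Y; (iii) each ρ'_y (with π'_y > 0) is a density matrix, and Σ_{y : π'_y > 0} π'_y ρ'_y = ρ̄, i.e. the average states of the original and dual ensembles coincide. -/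

import Mathlib

open Matrix
open scoped ComplexOrder Classical BigOperators

/-!
With `S = ρ̄^{1/2}` everything follows from `S * S = ρ̄` and the cyclicity of the trace:
the `M'_x = π_x S⁻¹ ρ_x S⁻¹` sum to `S⁻¹ ρ̄ S⁻¹ = 1`, `π'_y = Tr (S M_y S)` is the trace of a
positive semidefinite matrix, and the unnormalised dual states `S M_y S` sum to `S 1 S = ρ̄`.
Those with `π'_y = 0` drop out of the sum because a positive semidefinite matrix of trace zero
vanishes.
-/

/-- The (Hermitian positive semidefinite) square root of a positive semidefinite
complex matrix; junk value `0` if the matrix is not positive semidefinite. -/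
noncomputable def msqrt {d : ℕ} (A : Matrix (Fin d) (Fin d) ℂ) :
    Matrix (Fin d) (Fin d) ℂ :=
  if h : A.PosSemidef then
    (h.1.eigenvectorUnitary : Matrix (Fin d) (Fin d) ℂ) *
      diagonal ((↑) ∘ (√·) ∘ h.1.eigenvalues : Fin d → ℂ) *
      (star h.1.eigenvectorUnitary : Matrix (Fin d) (Fin d) ℂ) else 0

namespace Matrix

variable {n ι R : Type*} [Fintype n] [Fintype ι]

lemma PosSemidef.conj_of_isHermitian [CommRing R] [PartialOrder R] [StarRing R]
    {A S : Matrix n n R} (hA : A.PosSemidef) (hS : S.IsHermitian) : (S * A * S).PosSemidef := by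
  simpa only [hS.eq] using hA.mul_mul_conjTranspose_same S

lemma sum_smul_mul_mul [CommSemiring R] (c : ι → R) (A : ι → Matrix n n R)
    (B C : Matrix n n R) :
    ∑ i, c i • (B * A i * C) = B * (∑ i, c i • A i) * C := by
  simp only [Finset.mul_sum, Finset.sum_mul, mul_smul_comm, smul_mul_assoc]

lemma PosSemidef.ofReal_re_trace {A : Matrix n n ℂ} (hA : A.PosSemidef) :
    ((A.trace.re : ℝ) : ℂ) = A.trace :=
  (Complex.eq_re_of_ofReal_le (r := 0) (by simpa using hA.trace_nonneg)).symm

lemma PosSemidef.re_trace_nonneg {A : Matrix n n ℂ} (hA : A.PosSemidef) : 0 ≤ A.trace.re :=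
  (Complex.nonneg_iff.mp hA.trace_nonneg).1

lemma PosSemidef.inv_trace_smul {A : Matrix n n ℂ} (hA : A.PosSemidef) (h : 0 < A.trace.re) :
    ((A.trace.re : ℂ)⁻¹ • A).PosSemidef ∧ ((A.trace.re : ℂ)⁻¹ • A).trace = 1 := by
  have hne : (A.trace.re : ℂ) ≠ 0 := by exact_mod_cast h.ne'
  refine ⟨hA.smul (by exact_mod_cast (inv_pos.mpr h).le), ?_⟩
  rw [trace_smul, smul_eq_mul, hA.ofReal_re_trace, inv_mul_cancel₀ (hA.ofReal_re_trace ▸ hne)]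

lemma sum_filter_trace_pos_smul_inv_smul {A : ι → Matrix n n ℂ} (hA : ∀ i, (A i).PosSemidef) :
    ∑ i ∈ Finset.univ.filter (fun i => 0 < (A i).trace.re),
      ((A i).trace.re : ℂ) • (((A i).trace.re : ℂ)⁻¹ • A i) = ∑ i, A i := by
  have hzero : ∀ i, ¬ 0 < (A i).trace.re → A i = 0 := fun i hi =>
    (hA i).trace_eq_zero_iff.mp <| by
      rw [← (hA i).ofReal_re_trace, le_antisymm (not_lt.mp hi) (hA i).re_trace_nonneg,
        Complex.ofReal_zero]
  have hterm : ∀ i, ((A i).trace.re : ℂ) • (((A i).trace.re : ℂ)⁻¹ • A i) = A i := by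
    intro i
    by_cases hi : 0 < (A i).trace.re
    · rw [smul_smul, mul_inv_cancel₀ (by exact_mod_cast hi.ne'), one_smul]
    · simp [hzero i hi]
  simp_rw [hterm]
  exact Finset.sum_filter_of_ne fun i _ hi => by_contra (hi ∘ hzero i)

end Matrix

lemma msqrt_eq_conj {d : ℕ} {A : Matrix (Fin d) (Fin d) ℂ} (hA : A.PosSemidef) :
    msqrt A = Unitary.conjStarAlgAut ℂ _ hA.1.eigenvectorUnitary
      (diagonal ((↑) ∘ (√·) ∘ hA.1.eigenvalues)) := by
  rw [msqrt, dif_pos hA, Unitary.conjStarAlgAut_apply]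

lemma posSemidef_msqrt {d : ℕ} {A : Matrix (Fin d) (Fin d) ℂ} (hA : A.PosSemidef) :
    (msqrt A).PosSemidef := by
  rw [msqrt, dif_pos hA]
  refine (PosSemidef.diagonal fun i => ?_).mul_mul_conjTranspose_same _
  simp [Real.sqrt_nonneg]

lemma msqrt_mul_self {d : ℕ} {A : Matrix (Fin d) (Fin d) ℂ} (hA : A.PosSemidef) :
    msqrt A * msqrt A = A := by
  conv_rhs => rw [hA.1.spectral_theorem]
  rw [msqrt_eq_conj hA, ← map_mul, diagonal_mul_diagonal]
  congr 2
  ext i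
  simp [← Complex.ofReal_mul, Real.mul_self_sqrt (hA.eigenvalues_nonneg i)]

lemma isUnit_det_msqrt {d : ℕ} {A : Matrix (Fin d) (Fin d) ℂ} (hA : A.PosSemidef)
    (h : IsUnit A.det) : IsUnit (msqrt A).det := by
  rw [← msqrt_mul_self hA, det_mul] at h
  exact (IsUnit.mul_iff.mp h).1

/-- Finite-dimensional ensemble–observable duality (Proposition 1, parts
(i)–(iii)): given an ensemble `{π_x, ρ_x}` and a POVM `{M_y}` with invertible
average state `ρ̄ = Σ_x π_x ρ_x`, the dual objects
`M'_x = π_x ρ̄^{−1/2} ρ_x ρ̄^{−1/2}`, `π'_y = Tr(ρ̄ M_y)`,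
`ρ'_y = ρ̄^{1/2} M_y ρ̄^{1/2}/π'_y` (for `π'_y > 0`) satisfy:
(i) `{M'_x}` is a POVM; (ii) `π'` is a probability distribution on `Y`;
(iii) each `ρ'_y` with `π'_y > 0` is a density matrix and
`Σ_{y : π'_y > 0} π'_y ρ'_y = ρ̄`. -/
theorem stmt15 {X Y : Type*} [Fintype X] [Fintype Y] {d : ℕ}
    (ρ : X → Matrix (Fin d) (Fin d) ℂ)
    (hρ : ∀ x, (ρ x).PosSemidef) (hρtr : ∀ x, (ρ x).trace = 1)
    (π : X → ℝ) (hπ : ∀ x, 0 ≤ π x) (hπ1 : ∑ x, π x = 1)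
    (M : Y → Matrix (Fin d) (Fin d) ℂ)
    (hM : ∀ y, (M y).PosSemidef) (hM1 : ∑ y, M y = 1)
    (ρbar : Matrix (Fin d) (Fin d) ℂ) (hbar : ρbar = ∑ x, (π x : ℂ) • ρ x)
    (hinv : IsUnit ρbar.det)
    (M' : X → Matrix (Fin d) (Fin d) ℂ)
    (hM' : M' = fun x => (π x : ℂ) • ((msqrt ρbar)⁻¹ * ρ x * (msqrt ρbar)⁻¹))
    (π' : Y → ℝ) (hπ' : π' = fun y => ((ρbar * M y).trace).re)
    (ρ' : Y → Matrix (Fin d) (Fin d) ℂ)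
    (hρ' : ρ' = fun y => ((π' y : ℂ))⁻¹ • (msqrt ρbar * M y * msqrt ρbar)) :
    (∀ x, (M' x).PosSemidef) ∧ (∑ x, M' x) = 1 ∧
    (∀ y, 0 ≤ π' y) ∧ (∑ y, π' y) = 1 ∧
    (∀ y, 0 < π' y → (ρ' y).PosSemidef ∧ (ρ' y).trace = 1) ∧
    (∑ y ∈ Finset.univ.filter fun y => 0 < π' y, (π' y : ℂ) • ρ' y) = ρbar := by
  have hρbar : ρbar.PosSemidef :=
    hbar ▸ posSemidef_sum _ fun x _ => (hρ x).smul (by exact_mod_cast hπ x)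
  have htr : ρbar.trace = 1 := by
    simp [hbar, trace_sum, trace_smul, hρtr, ← Complex.ofReal_sum, hπ1]
  set S := msqrt ρbar
  have hS : S.PosSemidef := posSemidef_msqrt hρbar
  have hSS : S * S = ρbar := msqrt_mul_self hρbar
  have hSdet : IsUnit S.det := isUnit_det_msqrt hρbar hinv
  have hSMS : ∀ y, (S * M y * S).PosSemidef := fun y => (hM y).conj_of_isHermitian hS.1
  have hπ'S : π' = fun y => (S * M y * S).trace.re := by
    rw [hπ', ← hSS]
    ext y
    rw [trace_mul_cycle S (M y) S]
  subst hM' hρ' hπ'S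
  refine ⟨fun x => ((hρ x).conj_of_isHermitian hS.1.inv).smul (by exact_mod_cast hπ x), ?_,
    fun y => (hSMS y).re_trace_nonneg, ?_, fun y => (hSMS y).inv_trace_smul, ?_⟩
  · rw [sum_smul_mul_mul, ← hbar, ← hSS, Matrix.mul_assoc,
      mul_nonsing_inv_cancel_right _ _ hSdet, nonsing_inv_mul _ hSdet]
  · rw [← Complex.re_sum, ← trace_sum, ← Finset.sum_mul, ← Finset.mul_sum, hM1, Matrix.mul_one,
      hSS, htr, Complex.one_re]
  · rw [sum_filter_trace_pos_smul_inv_smul hSMS, ← Finset.sum_mul, ← Finset.mul_sum, hM1,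
      Matrix.mul_one, hSS]
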